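/- arXiv:1310.1827 — 6 statements merged into one kernel-verified Lean document; each statement's English description precedes it below -/
import Mathlib

section
/- For every partition P of ω such that no cell of P belongs to a given free ultrafilter U, the partition P can be split into countably many subfamilies P = ⋃_{n∈ω} P_n such that for each n, the union ⋃P_n is infinite and does not belong to U. -/
lemma free_ultra_partition (V : Ultrafilter ℕ) (hs : ∀ n : ℕ, ({n} : Set ℕ) ∉ V) :
    ∃ D : ℕ → Set ℕ, (⋃ n, D n) = Set.univ ∧
      (∀ m n, m ≠ n → Disjoint (D m) (D n)) ∧
      ∀ n, (D n).Infinite ∧ D n ∉ V := by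
  set B : ℕ → Set ℕ := fun k => Set.range (Nat.pair k) with hB
  have hBinj : ∀ k, Function.Injective (Nat.pair k) := by
    intro k x y hxy
    exact (Nat.pair_eq_pair.mp hxy).2
  have hBinf : ∀ k, (B k).Infinite := fun k => Set.infinite_range_of_injective (hBinj k)
  have hBdisj : ∀ k l, k ≠ l → Disjoint (B k) (B l) := by
    intro k l hkl
    rw [Set.disjoint_left]
    rintro x ⟨a, rfl⟩ ⟨b, hb⟩
    exact hkl ((Nat.pair_eq_pair.mp hb).1).symm
  have hBmem : ∀ x : ℕ, x ∈ B x.unpair.1 := fun x => ⟨x.unpair.2, Nat.pair_unpair x⟩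
  by_cases hall : ∀ k, B k ∉ V
  · refine ⟨B, ?_, fun m n h => hBdisj m n h, fun n => ⟨hBinf n, hall n⟩⟩
    ext x; simp only [Set.mem_iUnion, Set.mem_univ, iff_true]
    exact ⟨x.unpair.1, hBmem x⟩
  · push_neg at hall
    obtain ⟨m, hm⟩ := hall
    set g : ℕ → ℕ := fun k => if k < m then k else k + 1 with hg
    have hgne : ∀ k, g k ≠ m := by
      intro k
      simp only [hg]
      split <;> omega
    have hginj : Function.Injective g := by
      intro a b hab
      simp only [hg] at hab
      split at hab <;> split at hab <;> omega
    have hgsurj : ∀ n, n ≠ m → ∃ k, g k = n := by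
      intro n hn
      rcases lt_or_gt_of_ne hn with h | h
      · exact ⟨n, if_pos h⟩
      · refine ⟨n - 1, ?_⟩
        have : ¬ (n - 1 < m) := by omega
        simp only [hg, if_neg this]; omega
    refine ⟨fun k => B (g k) ∪ {Nat.pair m k}, ?_, ?_, ?_⟩
    · ext x
      simp only [Set.mem_iUnion, Set.mem_univ, iff_true]
      by_cases hx : x.unpair.1 = m
      · refine ⟨x.unpair.2, Or.inr ?_⟩
        simp only [Set.mem_singleton_iff]
        rw [← hx, Nat.pair_unpair]
      · obtain ⟨k, hk⟩ := hgsurj _ hx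
        exact ⟨k, Or.inl (hk ▸ hBmem x)⟩
    · intro a b hab
      rw [Set.disjoint_left]
      rintro x (hx | hx) (hy | hy)
      · exact Set.disjoint_left.mp (hBdisj _ _ fun h => hab (hginj h)) hx hy
      · rw [Set.mem_singleton_iff] at hy
        exact Set.disjoint_left.mp (hBdisj _ _ (hgne a)) hx (hy ▸ ⟨b, rfl⟩)
      · rw [Set.mem_singleton_iff] at hx
        exact Set.disjoint_left.mp (hBdisj _ _ (hgne b)) hy (hx ▸ ⟨a, rfl⟩)
      · rw [Set.mem_singleton_iff] at hx hy
        exact hab (Nat.pair_eq_pair.mp (hx ▸ hy : Nat.pair m a = Nat.pair m b)).2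
    · intro k
      constructor
      · exact ((hBinf (g k)).mono Set.subset_union_left)
      · rw [Ultrafilter.union_mem_iff]
        rintro (h | h)
        · have hd := hBdisj (g k) m (hgne k)
          have : (∅ : Set ℕ) ∈ V := by
            have := V.toFilter.inter_mem h hm
            rwa [Set.disjoint_iff_inter_eq_empty.mp hd] at this
          exact V.toFilter.empty_notMem this
        · exact hs (Nat.pair m k) h

def IsPartition {X : Type*} (Prt : Set (Set X)) : Prop :=
  (∀ P ∈ Prt, P.Nonempty) ∧ ⋃₀ Prt = Set.univ ∧
    ∀ P ∈ Prt, ∀ Q ∈ Prt, P ≠ Q → Disjoint P Q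


theorem partition_splits_into_small_subfamilies (U : Ultrafilter ℕ)
    (hfree : Filter.cofinite ≤ (U : Filter ℕ))
    (Prt : Set (Set ℕ)) (hpart : IsPartition Prt) (hno : ∀ P ∈ Prt, P ∉ U) :
    ∃ f : ℕ → Set (Set ℕ),
      (⋃ n, f n) = Prt ∧
      (∀ m n, m ≠ n → Disjoint (f m) (f n)) ∧
      ∀ n, (⋃₀ f n).Infinite ∧ (⋃₀ f n) ∉ U := by
  obtain ⟨hne, hcov, hdis⟩ := hpart
  have hpick : ∀ P : Prt, ∃ x, x ∈ (P : Set ℕ) := fun P => hne P P.2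
  choose pick hpickmem using hpick
  have hpickinj : Function.Injective pick := by
    intro P Q hPQ
    by_contra h
    have hd := hdis P P.2 Q Q.2 (fun he => h (Subtype.ext he))
    exact Set.disjoint_left.mp hd (hpickmem P) (hPQ ▸ hpickmem Q)
  have hcnt : Prt.Countable := Set.countable_iff_exists_injective.mpr ⟨pick, hpickinj⟩
  have hinf : Prt.Infinite := by
    intro hfin
    have hU : ⋃₀ Prt ∈ U := by rw [hcov]; exact Filter.univ_mem
    obtain ⟨t, ht, htU⟩ := (Ultrafilter.finite_sUnion_mem_iff hfin).mp hU
    exact hno t ht htU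
  have hc : Countable ↥Prt := hcnt.to_subtype
  have hi : Infinite ↥Prt := hinf.to_subtype
  obtain ⟨dinst⟩ := nonempty_denumerable ↥Prt
  let e : ℕ ≃ ↥Prt := (@Denumerable.eqv ↥Prt dinst).symm
  set E : ℕ → Set ℕ := fun n => ((e n : ↥Prt) : Set ℕ) with hE
  have hEmem : ∀ n, E n ∈ Prt := fun n => (e n).2
  have hEinj : Function.Injective E := fun a b h => e.injective (Subtype.ext h)
  have hEsurj : ∀ P ∈ Prt, ∃ n, E n = P := by
    intro P hP
    exact ⟨e.symm ⟨P, hP⟩, by simp [hE]⟩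
  have hqex : ∀ x : ℕ, ∃ n, x ∈ E n := by
    intro x
    have : x ∈ ⋃₀ Prt := hcov ▸ Set.mem_univ x
    obtain ⟨P, hP, hx⟩ := this
    obtain ⟨n, rfl⟩ := hEsurj P hP
    exact ⟨n, hx⟩
  choose q hq using hqex
  have hq_unique : ∀ x n, x ∈ E n → q x = n := by
    intro x n hx
    by_contra h
    have hEne : E (q x) ≠ E n := fun he => h (hEinj he)
    exact Set.disjoint_left.mp (hdis _ (hEmem (q x)) _ (hEmem n) hEne) (hq x) hx
  have hpre : ∀ A : Set ℕ, q ⁻¹' A = ⋃ k ∈ A, E k := by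
    intro A
    ext x
    simp only [Set.mem_preimage, Set.mem_iUnion, exists_prop]
    constructor
    · intro h; exact ⟨q x, h, hq x⟩
    · rintro ⟨k, hk, hxk⟩; rwa [hq_unique x k hxk]
  set V : Ultrafilter ℕ := U.map q with hV
  have hsing : ∀ n : ℕ, ({n} : Set ℕ) ∉ V := by
    intro n hn
    rw [hV, Ultrafilter.mem_map, hpre] at hn
    simp only [Set.mem_singleton_iff, Set.iUnion_iUnion_eq_left] at hn
    exact hno (E n) (hEmem n) hn
  obtain ⟨D, hDcov, hDdisj, hD⟩ := free_ultra_partition V hsing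
  refine ⟨fun n => E '' D n, ?_, ?_, ?_⟩
  · rw [← Set.image_iUnion, hDcov, Set.image_univ]
    ext P
    simp only [Set.mem_range]
    exact ⟨fun ⟨n, h⟩ => h ▸ hEmem n, fun h => hEsurj P h⟩
  · intro m n hmn
    rw [Set.disjoint_left]
    rintro P ⟨a, ha, rfl⟩ ⟨b, hb, hab⟩
    exact Set.disjoint_left.mp (hDdisj m n hmn) ha (hEinj hab ▸ hb)
  · intro n
    have hsU : ⋃₀ (E '' D n) = q ⁻¹' (D n) := by
      rw [hpre, Set.sUnion_image]
    constructor
    · have hsub : (fun k => pick (e k)) '' D n ⊆ ⋃₀ (E '' D n) := by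
        rintro x ⟨k, hk, rfl⟩
        exact ⟨E k, ⟨k, hk, rfl⟩, hpickmem (e k)⟩
      refine Set.Infinite.mono hsub ?_
      exact Set.Infinite.image ((hpickinj.comp e.injective).injOn) (hD n).1
    · rw [hsU]
      intro hmem
      exact (hD n).2 ((Ultrafilter.mem_map).mpr hmem)
end

section
/- For any group G acting on a set X, every G-Ramsey ultrafilter on X is G-selective. -/
open Pointwise

def IsInvariantPartition (G : Type*) {X : Type*} [Group G] [MulAction G X]
    (Prt : Set (Set X)) : Prop :=
  ∀ g : G, ∀ P ∈ Prt, g • P ∈ Prt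

def IsGSelective (G : Type*) {X : Type*} [Group G] [MulAction G X]
    (U : Ultrafilter X) : Prop :=
  ∀ Prt : Set (Set X), IsPartition Prt → IsInvariantPartition G Prt →
    (∃ P ∈ Prt, P ∈ U) ∨ ∃ U₀ ∈ U, ∀ P ∈ Prt, (U₀ ∩ P).Subsingleton

/-- `U` is `G`-Ramsey: every `G`-invariant 2-coloring of pairs (given as a coloring of
2-element subsets, i.e. of sets `{x, y}` with `x ≠ y`) is constant on the pairs of
some member of `U`. -/
def IsGRamsey (G : Type*) {X : Type*} [Group G] [MulAction G X]
    (U : Ultrafilter X) : Prop :=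
  ∀ χ : Set X → Bool,
    (∀ g : G, ∀ x y : X, x ≠ y → χ {g • x, g • y} = χ {x, y}) →
    ∃ U₀ ∈ U, ∃ c : Bool, ∀ x ∈ U₀, ∀ y ∈ U₀, x ≠ y → χ {x, y} = c

theorem gSelective_of_gRamsey (G X : Type*) [Group G] [MulAction G X]
    (U : Ultrafilter X) (h : IsGRamsey G U) : IsGSelective G U := by
  intro Prt hPart hInv
  classical
  obtain ⟨-, hcover, hdisj⟩ := hPart
  set χ : Set X → Bool := fun s => decide (∃ P ∈ Prt, s ⊆ P) with hχ
  have hinv : ∀ g : G, ∀ x y : X, x ≠ y → χ {g • x, g • y} = χ {x, y} := by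
    intro g x y _
    simp only [hχ, decide_eq_decide]
    constructor
    · rintro ⟨P, hP, hsub⟩
      refine ⟨g⁻¹ • P, hInv g⁻¹ P hP, ?_⟩
      intro z hz
      rcases hz with rfl | rfl
      · simpa [Set.mem_smul_set_iff_inv_smul_mem] using hsub (by left; rfl)
      · simpa [Set.mem_smul_set_iff_inv_smul_mem] using hsub (by right; rfl)
    · rintro ⟨P, hP, hsub⟩
      refine ⟨g • P, hInv g P hP, ?_⟩
      intro z hz
      rcases hz with rfl | rfl
      · exact ⟨x, hsub (by left; rfl), rfl⟩
      · exact ⟨y, hsub (by right; rfl), rfl⟩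
  obtain ⟨U₀, hU₀, c, hc⟩ := h χ hinv
  cases c with
  | true =>
    left
    obtain ⟨x₀, hx₀⟩ := Ultrafilter.nonempty_of_mem hU₀
    have : x₀ ∈ ⋃₀ Prt := by rw [hcover]; trivial
    obtain ⟨P, hP, hx₀P⟩ := this
    refine ⟨P, hP, U.mem_of_superset hU₀ ?_⟩
    intro y hy
    by_cases hxy : y = x₀
    · exact hxy ▸ hx₀P
    · have := hc x₀ hx₀ y hy (Ne.symm hxy)
      simp only [hχ, decide_eq_true_eq] at this
      obtain ⟨Q, hQ, hsub⟩ := this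
      have hPQ : P = Q := by
        by_contra hne
        exact (hdisj P hP Q hQ hne).ne_of_mem hx₀P (hsub (by left; rfl)) rfl
      exact hPQ ▸ hsub (by right; rfl)
  | false =>
    right
    refine ⟨U₀, hU₀, fun P hP x hx y hy => ?_⟩
    by_contra hne
    have := hc x hx.1 y hy.1 hne
    simp only [hχ, decide_eq_false_iff_not] at this
    exact this ⟨P, hP, by rintro z (rfl | rfl); exacts [hx.2, hy.2]⟩
end

section
/- No ultrafilter in the closure of the smallest two-sided ideal K(βℤ) of the semigroup (βℤ, +) is ℤ-Ramsey. -/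
attribute [local instance] Ultrafilter.add Ultrafilter.addSemigroup

def IsZRamsey (U : Ultrafilter ℤ) : Prop :=
  ∀ χ' : ℤ → Bool, ∃ U₀ ∈ U, ∃ c : Bool,
    ∀ x ∈ U₀, ∀ y ∈ U₀, x ≠ y → χ' |y - x| = c

/-- A (nonempty) two-sided ideal of the semigroup `(βℤ, +)`. -/
def IsTwoSidedIdeal (I : Set (Ultrafilter ℤ)) : Prop :=
  I.Nonempty ∧ ∀ p ∈ I, ∀ q : Ultrafilter ℤ, q + p ∈ I ∧ p + q ∈ I

/-- The smallest two-sided ideal `K(βℤ)`, realized as the intersection of all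
two-sided ideals. -/
def KBetaZ : Set (Ultrafilter ℤ) := ⋂₀ {I | IsTwoSidedIdeal I}

/-
The ultrafilters all of whose members `A` have syndetic difference set `A - A` form a closed
two-sided ideal of `βℤ`, so they contain `K(βℤ)` and its closure. It is nonempty because this
notion of largeness is partition regular: if `A - A` is not syndetic one finds arbitrarily many
pairwise disjoint translates of `A`, and then removing `A` from a thick set leaves it thick.
On the other hand, colour `d` by the parity of `⌊log₂ |d|⌋`. The differences of a monochromatic
set avoid every dyadic block `[2^j, 2^(j+1))` of the other parity, and these blocks are
arbitrarily long, so the difference set is not syndetic.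
-/

open Pointwise

section Largeness

variable {G : Type*} [AddCommGroup G]

def Syndetic (D : Set G) : Prop := ∃ F : Finset G, ∀ z : G, ∃ f ∈ F, f + z ∈ D

def Thick (T : Set G) : Prop := ∀ H : Finset G, ∃ t : G, ∀ h ∈ H, h + t ∈ T

theorem Syndetic.mono {D E : Set G} (hDE : D ⊆ E) (hD : Syndetic D) : Syndetic E := by
  obtain ⟨F, hF⟩ := hD
  exact ⟨F, fun z => (hF z).imp fun _ ⟨hf, hfz⟩ => ⟨hf, hDE hfz⟩⟩

theorem Thick.nonempty {T : Set G} (hT : Thick T) : T.Nonempty := by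
  obtain ⟨t, ht⟩ := hT {0}
  exact ⟨0 + t, ht 0 (Finset.mem_singleton_self 0)⟩

theorem exists_seq_sub_notMem_of_not_syndetic {D : Set G} (hD : ¬ Syndetic D) (m : ℕ) :
    ∃ s : ℕ → G, ∀ i j, i < j → j < m → s j - s i ∉ D := by
  classical
  induction m with
  | zero => exact ⟨0, fun _ _ _ hj => absurd hj (Nat.not_lt_zero _)⟩
  | succ m ih =>
    obtain ⟨s, hs⟩ := ih
    obtain ⟨t, ht⟩ : ∃ t : G, ∀ f ∈ (Finset.range m).image (-s ·), f + t ∉ D := by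
      by_contra! h
      exact hD ⟨_, h⟩
    refine ⟨fun k => if k < m then s k else t, fun i j hij hj => ?_⟩
    rcases Nat.lt_succ_iff_lt_or_eq.mp hj with hjm | rfl
    · simpa [hjm, hij.trans hjm] using hs i j hij hjm
    · simpa [hij, sub_eq_neg_add] using
        ht _ (Finset.mem_image_of_mem _ (Finset.mem_range.mpr hij))

theorem Thick.diff {T A : Set G} (hT : Thick T) (hA : ¬ Syndetic (A - A)) : Thick (T \ A) := by
  classical
  intro H
  set n := H.card
  obtain ⟨s, hs⟩ := exists_seq_sub_notMem_of_not_syndetic hA (n + 1)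
  -- the translates `A - s j`, `j ≤ n`, are pairwise disjoint
  have hdisj : ∀ i j, i < j → j < n + 1 → ∀ x, x + s i ∈ A → x + s j ∈ A → False :=
    fun i j hij hj x hi hj' =>
      hs i j hij hj ⟨x + s j, hj', x + s i, hi, add_sub_add_left_eq_sub _ _ _⟩
  obtain ⟨t, ht⟩ := hT ((H ×ˢ Finset.range (n + 1)).image fun p => p.1 + s p.2)
  have hT' : ∀ h ∈ H, ∀ j < n + 1, h + s j + t ∈ T := fun h hh j hj =>
    ht _ (Finset.mem_image.mpr
      ⟨(h, j), Finset.mem_product.mpr ⟨hh, Finset.mem_range.mpr hj⟩, rfl⟩)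
  -- each `h ∈ H` lies in at most one of the `n + 1` disjoint translates
  obtain ⟨j, hj, hjA⟩ : ∃ j < n + 1, ∀ h ∈ H, h + s j + t ∉ A := by
    by_contra! hcon
    choose! g hgH hgA using
      fun j (hj : j ∈ Finset.range (n + 1)) => hcon j (Finset.mem_range.mp hj)
    obtain ⟨i, hi, j, hj, hne, hij⟩ := Finset.exists_ne_map_eq_of_card_lt_of_maps_to
      (by simp [n]) hgH
    have hi' := hgA i hi
    have hj' := hgA j hj
    rw [hij, add_right_comm] at hi'
    rw [add_right_comm] at hj'
    rw [Finset.mem_range] at hi hj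
    rcases hne.lt_or_gt with hlt | hlt
    exacts [hdisj i j hlt hj _ hi' hj', hdisj j i hlt hi _ hj' hi']
  exact ⟨s j + t, fun h hh => by
    rw [← add_assoc]; exact ⟨hT' h hh j hj, hjA h hh⟩⟩

theorem Thick.exists_syndetic_sub_of_subset_biUnion {ι : Type*} {T : Set G} (hT : Thick T)
    (s : Finset ι) (A : ι → Set G) (hcover : T ⊆ ⋃ i ∈ s, A i) : ∃ i ∈ s, Syndetic (A i - A i) := by
  classical
  induction s using Finset.induction_on generalizing T with
  | empty =>
    obtain ⟨x, hx⟩ := hT.nonempty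
    simpa using hcover hx
  | insert a s _ ih =>
    by_cases ha : Syndetic (A a - A a)
    · exact ⟨a, Finset.mem_insert_self a s, ha⟩
    obtain ⟨i, hi, hsyn⟩ := ih (hT.diff ha) fun x ⟨hxT, hxA⟩ => by
      simpa [hxA] using hcover hxT
    exact ⟨i, Finset.mem_insert_of_mem hi, hsyn⟩

theorem exists_ultrafilter_forall_syndetic_sub :
    ∃ U : Ultrafilter G, ∀ A ∈ U, Syndetic (A - A) := by
  set 𝒮 : Set (Set G) := {B | ¬ Syndetic (Bᶜ - Bᶜ)}
  have : (Filter.generate 𝒮).NeBot := by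
    refine Filter.generate_neBot_iff.mpr fun t ht htfin => ?_
    by_contra hempty
    have hcover : Set.univ ⊆ ⋃ B ∈ htfin.toFinset, Bᶜ := fun x _ => by
      have hx : x ∉ ⋂₀ t := fun hx => hempty ⟨x, hx⟩
      simpa using hx
    have huniv : Thick (Set.univ : Set G) := fun _ => ⟨0, fun _ _ => trivial⟩
    obtain ⟨B, hB, hsyn⟩ := huniv.exists_syndetic_sub_of_subset_biUnion _ _ hcover
    exact ht (htfin.mem_toFinset.mp hB) hsyn
  refine ⟨Ultrafilter.of (Filter.generate 𝒮), fun A hA => ?_⟩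
  by_contra hsyn
  have hAc : Aᶜ ∈ 𝒮 := by simpa [𝒮] using hsyn
  exact Ultrafilter.compl_notMem_iff.mpr hA (Ultrafilter.of_le _ (Filter.mem_generate_of_mem hAc))

theorem sub_subset_sub_of_add_mem {A B : Set G} (x : G) (h : ∀ a ∈ A, x + a ∈ B) :
    A - A ⊆ B - B := by
  rintro _ ⟨a, ha, b, hb, rfl⟩
  exact ⟨x + a, h a ha, x + b, h b hb, add_sub_add_left_eq_sub _ _ _⟩

theorem syndetic_sub_of_mem_add_left {p : Ultrafilter G} (hp : ∀ A ∈ p, Syndetic (A - A))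
    (q : Ultrafilter G) : ∀ B ∈ q + p, Syndetic (B - B) := by
  intro B hB
  obtain ⟨x, hx⟩ := ((Ultrafilter.eventually_add q p (· ∈ B)).mp hB).exists
  exact (hp _ hx).mono (sub_subset_sub_of_add_mem x fun _ => id)

theorem syndetic_sub_of_mem_add_right {p : Ultrafilter G} (hp : ∀ A ∈ p, Syndetic (A - A))
    (q : Ultrafilter G) : ∀ B ∈ p + q, Syndetic (B - B) := by
  intro B hB
  refine (hp _ ((Ultrafilter.eventually_add p q (· ∈ B)).mp hB)).mono ?_
  rintro _ ⟨a, ha, b, hb, rfl⟩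
  obtain ⟨y, hya, hyb⟩ := Ultrafilter.nonempty_of_mem (Filter.inter_mem ha hb)
  exact ⟨a + y, hya, b + y, hyb, add_sub_add_right_eq_sub _ _ _⟩

end Largeness

theorem Ultrafilter.isClosed_setOf_forall_mem {α : Type*} (P : Set α → Prop) :
    IsClosed {U : Ultrafilter α | ∀ A ∈ U, P A} := by
  simp only [Set.ofPred_forall]
  refine isClosed_iInter fun A => ?_
  by_cases hA : P A
  · simp [hA]
  · simp only [hA, imp_false]
    exact (ultrafilter_isOpen_basic A).isClosed_compl

theorem isTwoSidedIdeal_setOf_forall_syndetic_sub :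
    IsTwoSidedIdeal {V : Ultrafilter ℤ | ∀ A ∈ V, Syndetic (A - A)} :=
  ⟨exists_ultrafilter_forall_syndetic_sub, fun _ hp q =>
    ⟨syndetic_sub_of_mem_add_left hp q, syndetic_sub_of_mem_add_right hp q⟩⟩

theorem syndetic_sub_of_mem_closure_KBetaZ {U : Ultrafilter ℤ} (hU : U ∈ closure KBetaZ)
    {A : Set ℤ} (hA : A ∈ U) : Syndetic (A - A) :=
  closure_minimal (Set.sInter_subset_of_mem isTwoSidedIdeal_setOf_forall_syndetic_sub)
    (Ultrafilter.isClosed_setOf_forall_mem fun A => Syndetic (A - A)) hU A hA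

theorem Syndetic.exists_mem_Icc {D : Set ℤ} (hD : Syndetic D) :
    ∃ M : ℕ, ∀ z : ℤ, ∃ d ∈ D, z ≤ d ∧ d ≤ z + M := by
  obtain ⟨F, hF⟩ := hD
  set m := F.sup Int.natAbs
  refine ⟨2 * m, fun z => ?_⟩
  obtain ⟨f, hf, hfD⟩ := hF (z + m)
  have : f.natAbs ≤ m := Finset.le_sup hf
  exact ⟨f + (z + m), hfD, by omega, by omega⟩

theorem Syndetic.exists_pos_mem_even_log_eq {D : Set ℤ} (hD : Syndetic D) (b : Bool) :
    ∃ d ∈ D, 0 < d ∧ decide (Even (Nat.log 2 d.natAbs)) = b := by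
  obtain ⟨M, hM⟩ := hD.exists_mem_Icc
  obtain ⟨j, hMj, hjb⟩ : ∃ j, M < 2 ^ j ∧ decide (Even j) = b := by
    have h₁ : M < 2 ^ (2 * M + 1) := (by omega : M < 2 * M + 1).trans Nat.lt_two_pow_self
    have h₂ : M < 2 ^ (2 * M + 2) := (by omega : M < 2 * M + 2).trans Nat.lt_two_pow_self
    cases b
    exacts [⟨2 * M + 1, h₁, by simp [parity_simps]⟩, ⟨2 * M + 2, h₂, by simp [parity_simps]⟩]
  obtain ⟨d, hdD, hd₁, hd₂⟩ := hM (2 ^ j : ℕ)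
  have hlog : Nat.log 2 d.natAbs = j := by
    refine Nat.log_eq_of_pow_le_of_lt_pow (by omega) ?_
    rw [pow_succ]
    omega
  exact ⟨d, hdD, by omega, hlog ▸ hjb⟩

theorem not_zRamsey_of_mem_closure_K (U : Ultrafilter ℤ)
    (hU : U ∈ closure KBetaZ) : ¬ IsZRamsey U := by
  intro hRamsey
  obtain ⟨U₀, hU₀, c, hmono⟩ := hRamsey fun d => decide (Even (Nat.log 2 d.natAbs))
  obtain ⟨d, hd, hpos, hcolor⟩ :=
    (syndetic_sub_of_mem_closure_KBetaZ hU hU₀).exists_pos_mem_even_log_eq (!c)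
  obtain ⟨a, ha, b, hb, rfl⟩ := Set.mem_sub.mp hd
  have hc := hmono b hb a ha (by omega)
  rw [abs_of_pos hpos, hcolor] at hc
  exact Bool.not_ne_self c hc
end

section
/- The set Z₀ = ⋃_{n∈ω} [2^{2n}, 2^{2n+1}) ⊆ ℤ⁺ satisfies: for every finite subset F of ℤ and every subset A of ℤ with {y - x : x,y ∈ A, x < y} ⊆ Z₀, we have F + A - A ≠ ℤ; and the same holds with Z₁ = ℤ⁺ \ Z₀ in place of Z₀. -/
open Pointwise

def Z0 : Set ℤ := {z | ∃ n : ℕ, (2 : ℤ) ^ (2 * n) ≤ z ∧ z < 2 ^ (2 * n + 1)}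

def Z1 : Set ℤ := {z | 0 < z} \ Z0

lemma key_gap (Z : Set ℤ)
    (hgap : ∀ M : ℤ, 0 ≤ M → ∃ a : ℤ, 0 < a ∧ ∀ z : ℤ, a ≤ z → z ≤ a + 2 * M → z ∉ Z) :
    ∀ F : Set ℤ, F.Finite → ∀ A : Set ℤ,
      ({d | ∃ x ∈ A, ∃ y ∈ A, x < y ∧ d = y - x} ⊆ Z) → F + A - A ≠ Set.univ := by
  intro F hF A hA h
  obtain ⟨u, hu⟩ := hF.bddAbove
  obtain ⟨l, hl⟩ := hF.bddBelow
  set M := max |u| |l| with hM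
  have hM0 : 0 ≤ M := le_trans (abs_nonneg u) (le_max_left _ _)
  obtain ⟨a, ha0, ha⟩ := hgap M hM0
  have hz : (a + M) ∈ F + A - A := h ▸ Set.mem_univ _
  obtain ⟨p, hp, q, hq, hpq⟩ := Set.mem_sub.mp hz
  obtain ⟨f, hf, x, hx, hfx⟩ := Set.mem_add.mp hp
  have hfM : f ≤ M := le_trans (le_trans (hu hf) (le_abs_self u)) (le_max_left _ _)
  have hfM' : -M ≤ f :=
    le_trans (le_trans (neg_le_neg (le_max_right |u| |l|)) (neg_abs_le l)) (hl hf)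
  have h1 : a ≤ x - q := by omega
  have h2 : x - q ≤ a + 2 * M := by omega
  have hqx : q < x := by omega
  exact ha (x - q) h1 h2 (hA ⟨q, hq, x, hx, hqx, rfl⟩)

lemma two_pow_gap (M : ℤ) (hM : 0 ≤ M) : ∃ n : ℕ, 2 * M < (2:ℤ) ^ n := by
  obtain ⟨n, hn⟩ := pow_unbounded_of_one_lt (2 * M) (by norm_num : (1:ℤ) < 2)
  exact ⟨n, hn⟩

theorem Z0_Z1_not_syndetic_differences :
    (∀ F : Set ℤ, F.Finite → ∀ A : Set ℤ,
      ({d | ∃ x ∈ A, ∃ y ∈ A, x < y ∧ d = y - x} ⊆ Z0) → F + A - A ≠ Set.univ) ∧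
    (∀ F : Set ℤ, F.Finite → ∀ A : Set ℤ,
      ({d | ∃ x ∈ A, ∃ y ∈ A, x < y ∧ d = y - x} ⊆ Z1) → F + A - A ≠ Set.univ) := by
  constructor
  · apply key_gap
    intro M hM0
    obtain ⟨n, hn⟩ := two_pow_gap M hM0
    refine ⟨2 ^ (2 * n + 1), by positivity, fun z hz1 hz2 hzZ => ?_⟩
    obtain ⟨m, h1, h2⟩ := hzZ
    have hpow : (2:ℤ) ^ n ≤ 2 ^ (2 * n + 1) := pow_le_pow_right₀ (by norm_num) (by omega)
    rcases le_or_gt m n with hmn | hmn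
    · have : (2:ℤ) ^ (2 * m + 1) ≤ 2 ^ (2 * n + 1) :=
        pow_le_pow_right₀ (by norm_num) (by omega)
      omega
    · have : (2:ℤ) ^ (2 * n + 2) ≤ 2 ^ (2 * m) :=
        pow_le_pow_right₀ (by norm_num) (by omega)
      have h3 : (2:ℤ) ^ (2 * n + 2) = 2 * 2 ^ (2 * n + 1) := by ring
      omega
  · apply key_gap
    intro M hM0
    obtain ⟨n, hn⟩ := two_pow_gap M hM0
    refine ⟨2 ^ (2 * n), by positivity, fun z hz1 hz2 hzZ => ?_⟩
    have hpow : (2:ℤ) ^ n ≤ 2 ^ (2 * n) := pow_le_pow_right₀ (by norm_num) (by omega)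
    have h3 : (2:ℤ) ^ (2 * n + 1) = 2 * 2 ^ (2 * n) := by ring
    exact hzZ.2 ⟨n, hz1, by omega⟩
end

section
/- Every ℤ-Ramsey free ultrafilter on ℤ is right cancellable in the semigroup (βℤ, +). -/
attribute [local instance] Ultrafilter.add Ultrafilter.addSemigroup

/-! Auxiliary material for the proof. -/

open Filter

/-- Odd part decomposition. -/
lemma zr_decomp (n : ℕ) (hn : n ≠ 0) : ∃ m, m % 2 = 1 ∧ n = 2 ^ padicValNat 2 n * m := by
  refine ⟨n / 2 ^ padicValNat 2 n, ?_, ?_⟩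
  · have h := Nat.not_dvd_ordCompl Nat.prime_two hn
    rw [Nat.factorization_def n Nat.prime_two] at h
    omega
  · have h := Nat.ordProj_mul_ordCompl_eq_self n 2
    rw [Nat.factorization_def n Nat.prime_two] at h
    omega

lemma zr_v2_mul (k m : ℕ) (hm : m % 2 = 1) : padicValNat 2 (2 ^ k * m) = k := by
  have hm0 : m ≠ 0 := by omega
  have h2 : ¬(2 ∣ m) := by omega
  have e1 : padicValNat 2 ((2:ℕ) ^ k) = k := padicValNat.prime_pow k
  have e2 : padicValNat 2 m = 0 := padicValNat.eq_zero_of_not_dvd h2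
  rw [padicValNat.mul (by positivity) hm0, e1, e2]
  omega

lemma zr_L1 (a b : ℕ) (ha : 0 < a) (hab : a < b)
    (hv : padicValNat 2 a < padicValNat 2 b) :
    ¬(((b + a) / 2 ^ padicValNat 2 (b + a)) % 4 = 1 ↔
      ((b - a) / 2 ^ padicValNat 2 (b - a)) % 4 = 1) := by
  obtain ⟨q, hq, haq⟩ := zr_decomp a (by omega)
  obtain ⟨p, hp, hbp⟩ := zr_decomp b (by omega)
  set v := padicValNat 2 a with hvdef
  set w := padicValNat 2 b with hwdef
  set E := 2 ^ (w - v) * p with hE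
  have hpow : (2:ℕ) ^ (w - v) = 2 * 2 ^ (w - v - 1) := by
    obtain ⟨k, hk⟩ : ∃ k, w - v = k + 1 := ⟨w - v - 1, by omega⟩
    rw [hk, Nat.add_sub_cancel, pow_succ]; ring
  have hEeven : E % 2 = 0 := by
    have h3 : E = 2 * (2 ^ (w - v - 1) * p) := by rw [hE, hpow]; ring
    omega
  have hsplitw : (2:ℕ) ^ w = 2 ^ v * 2 ^ (w - v) := by
    rw [← pow_add]; congr 1; omega
  have hbE : b = 2 ^ v * E := by
    rw [hbp, hE, hsplitw]; ring
  have hqE : q < E := by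
    by_contra hh
    push_neg at hh
    have : b ≤ a := by rw [haq, hbE]; exact Nat.mul_le_mul_left _ hh
    omega
  have h1 : b + a = 2 ^ v * (E + q) := by rw [haq, hbE]; ring
  have hms : 2 ^ v * E = 2 ^ v * (E - q) + 2 ^ v * q := by
    rw [← Nat.mul_add]; congr 1; omega
  have h2 : b - a = 2 ^ v * (E - q) := by
    rw [haq, hbE]; omega
  have hv1 : padicValNat 2 (b + a) = v := by rw [h1]; exact zr_v2_mul _ _ (by omega)
  have hv2 : padicValNat 2 (b - a) = v := by rw [h2]; exact zr_v2_mul _ _ (by omega)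
  have hd1 : (b + a) / 2 ^ v = E + q := by
    rw [h1]; exact Nat.mul_div_cancel_left _ (by positivity)
  have hd2 : (b - a) / 2 ^ v = E - q := by
    rw [h2]; exact Nat.mul_div_cancel_left _ (by positivity)
  rw [hv1, hv2, hd1, hd2]
  omega

lemma zr_L2 (a b : ℕ) (ha : 0 < a) (hab : a < b)
    (hv : padicValNat 2 a = padicValNat 2 b) :
    padicValNat 2 (b + a) = padicValNat 2 a + 1 ∨
    padicValNat 2 (b - a) = padicValNat 2 a + 1 := by
  obtain ⟨q, hq, haq⟩ := zr_decomp a (by omega)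
  obtain ⟨p, hp, hbp⟩ := zr_decomp b (by omega)
  set v := padicValNat 2 a with hvdef
  rw [← hv] at hbp
  have hqp : q < p := by
    by_contra hh
    push_neg at hh
    have : b ≤ a := by rw [haq, hbp]; exact Nat.mul_le_mul_left _ hh
    omega
  have hcase : (p + q) % 4 = 2 ∨ (p - q) % 4 = 2 := by omega
  rcases hcase with h | h
  · left
    have h1 : b + a = 2 ^ (v + 1) * ((p + q) / 2) := by
      rw [haq, hbp, pow_succ]
      have h3 : p + q = 2 * ((p + q) / 2) := by omega
      calc 2 ^ v * p + 2 ^ v * q = 2 ^ v * (p + q) := by ring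
        _ = 2 ^ v * (2 * ((p + q) / 2)) := by rw [← h3]
        _ = 2 ^ v * 2 * ((p + q) / 2) := by ring
    rw [h1]; exact zr_v2_mul _ _ (by omega)
  · right
    have hms : 2 ^ v * p = 2 ^ v * (p - q) + 2 ^ v * q := by
      rw [← Nat.mul_add]; congr 1; omega
    have h2 : 2 ^ v * (p - q) = 2 ^ (v + 1) * ((p - q) / 2) := by
      rw [pow_succ]
      have h3 : p - q = 2 * ((p - q) / 2) := by omega
      calc 2 ^ v * (p - q) = 2 ^ v * (2 * ((p - q) / 2)) := by rw [← h3]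
        _ = 2 ^ v * 2 * ((p - q) / 2) := by ring
    have h1 : b - a = 2 ^ (v + 1) * ((p - q) / 2) := by
      rw [haq, hbp]; omega
    rw [h1]; exact zr_v2_mul _ _ (by omega)

/-- The recursively shrunk family of sets used to show that a "strongly discrete"
ultrafilter is right cancellable. -/
def zrFseq (B : Set ℤ) (e : ℕ → ℤ) : ℕ → Set ℤ
  | n => B ∩ {x | ∀ m, m < n → x + (e n - e m) ∉ zrFseq B e m}

theorem zRamsey_right_cancellable (W : Ultrafilter ℤ)
    (hfree : Filter.cofinite ≤ (W : Filter ℤ))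
    (hRamsey : IsZRamsey W) :
    ∀ U V : Ultrafilter ℤ, U + W = V + W → U = V := by
  classical
  -- Step 1: there is a W-large set all of whose nontrivial translates are W-small.
  have key : ∃ B ∈ W, ∀ d : ℤ, d ≠ 0 → {x : ℤ | x - d ∈ B} ∉ W := by
    by_contra hcon
    push_neg at hcon
    set D : Set ℤ → Set ℤ := fun B => {d | d ≠ 0 ∧ {x | x - d ∈ B} ∈ W} with hD
    have hDne : ∀ B ∈ W, (D B).Nonempty := by
      intro B hB
      obtain ⟨d, hd1, hd2⟩ := hcon B hB
      exact ⟨d, hd1, hd2⟩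
    have hDmono : ∀ B C : Set ℤ, B ⊆ C → D B ⊆ D C := by
      intro B C hBC d hd
      refine ⟨hd.1, mem_of_superset hd.2 ?_⟩
      intro x hx
      exact hBC hx
    by_cases hfin : ∃ B ∈ W, (D B).Finite
    · -- a fixed translation works for all W-sets: absurd.
      obtain ⟨B₀, hB₀W, hB₀fin⟩ := hfin
      have hex : ∃ k, ∃ B, B ∈ W ∧ (D B).Finite ∧ (D B).ncard = k :=
        ⟨(D B₀).ncard, B₀, hB₀W, hB₀fin, rfl⟩
      obtain ⟨B₁, hB₁W, hB₁fin, hB₁card⟩ := Nat.find_spec hex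
      have hmin : ∀ B ∈ W, D B₁ ⊆ D B := by
        intro B hB
        have hsub : D (B₁ ∩ B) ⊆ D B₁ := hDmono _ _ Set.inter_subset_left
        have hWc : B₁ ∩ B ∈ W := inter_mem hB₁W hB
        have hfin2 : (D (B₁ ∩ B)).Finite := hB₁fin.subset hsub
        have hle : (D B₁).ncard ≤ (D (B₁ ∩ B)).ncard := by
          rw [hB₁card]
          exact Nat.find_min' hex ⟨B₁ ∩ B, hWc, hfin2, rfl⟩
        have heq : D (B₁ ∩ B) = D B₁ := Set.eq_of_subset_of_ncard_le hsub hle hB₁fin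
        intro d hd
        rw [← heq] at hd
        exact hDmono _ _ Set.inter_subset_right hd
      obtain ⟨d₀, hd₀0, _⟩ := hDne B₁ hB₁W
      have hall : ∀ B ∈ W, {x : ℤ | x - d₀ ∈ B} ∈ W := by
        intro B hB
        exact ((hmin B hB) ⟨hd₀0, ‹{x | x - d₀ ∈ B₁} ∈ W›⟩).2
      have hdiv : ∀ x : ℤ, (x - d₀) / d₀ = x / d₀ - 1 := by
        intro x
        have h1 : x - d₀ = x + (-1) * d₀ := by ring
        rw [h1, Int.add_mul_ediv_right x (-1) hd₀0]
        omega
      rcases W.mem_or_compl_mem {n : ℤ | n / d₀ % 2 = 0} with hAW | hAW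
      · have h2 := hall _ hAW
        have h3 : {x : ℤ | x - d₀ ∈ {n : ℤ | n / d₀ % 2 = 0}} = {n : ℤ | n / d₀ % 2 = 0}ᶜ := by
          ext x
          simp only [Set.mem_setOf_eq, Set.mem_compl_iff, hdiv x]
          omega
        rw [h3] at h2
        exact (Ultrafilter.compl_notMem_iff.mpr hAW) h2
      · have h2 := hall _ hAW
        have h3 : {x : ℤ | x - d₀ ∈ {n : ℤ | n / d₀ % 2 = 0}ᶜ} = {n : ℤ | n / d₀ % 2 = 0} := by
          ext x
          simp only [Set.mem_setOf_eq, Set.mem_compl_iff, hdiv x]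
          omega
        rw [h3] at h2
        exact (Ultrafilter.compl_notMem_iff.mpr h2) hAW
    · -- all the difference sets are infinite : contradict Ramsey-ness.
      have hinf : ∀ B ∈ W, (D B).Infinite := by
        intro B hB
        rcases Set.finite_or_infinite (D B) with h | h
        · exact absurd ⟨B, hB, h⟩ hfin
        · exact h
      obtain ⟨U₁, hU₁W, c₁, hc₁⟩ :=
        hRamsey (fun m : ℤ => decide ((m.natAbs / 2 ^ padicValNat 2 m.natAbs) % 4 = 1))
      obtain ⟨U₂, hU₂W, c₂, hc₂⟩ :=
        hRamsey (fun m : ℤ => decide (padicValNat 2 m.natAbs % 2 = 0))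
      set U₀ : Set ℤ := U₁ ∩ U₂ with hU₀
      have hU₀W : U₀ ∈ W := inter_mem hU₁W hU₂W
      have colors : ∀ p q : ℤ, p ∈ U₀ → q ∈ U₀ → p ≠ q →
          (decide (((q - p).natAbs / 2 ^ padicValNat 2 (q - p).natAbs) % 4 = 1) = c₁ ∧
           decide (padicValNat 2 (q - p).natAbs % 2 = 0) = c₂) := by
        intro p q hp hq hpq
        constructor
        · have h := hc₁ p hp.1 q hq.1 hpq
          simpa [Int.natAbs_abs] using h
        · have h := hc₂ p hp.2 q hq.2 hpq
          simpa [Int.natAbs_abs] using h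
      -- descent on the 2-adic valuation
      have QQ : ∀ v : ℕ, ∀ B : Set ℤ, B ∈ W → B ⊆ U₀ → ∀ d : ℤ, d ≠ 0 →
          {x : ℤ | x - d ∈ B} ∈ W → padicValNat 2 d.natAbs = v → False := by
        intro v
        induction v using Nat.strong_induction_on with
        | _ v IH =>
          intro B hBW hBU d hd0 hdW hv
          set B' : Set ℤ := B ∩ {x | x - d ∈ B} with hB'
          have hB'W : B' ∈ W := inter_mem hBW hdW
          have hB'U : B' ⊆ U₀ := fun x hx => hBU hx.1
          have hbig : ∃ e, e ∈ D B' ∧ d.natAbs < e.natAbs := by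
            by_contra hno
            push_neg at hno
            refine (hinf B' hB'W) ?_
            refine Set.Finite.subset (Set.finite_Icc (-(d.natAbs : ℤ)) (d.natAbs : ℤ)) ?_
            intro e he
            have h := hno e he
            simp only [Set.mem_Icc]
            omega
          obtain ⟨e, ⟨he0, heW⟩, hlt⟩ := hbig
          have hB''W : B' ∩ {x | x - e ∈ B'} ∈ W := inter_mem hB'W heW
          obtain ⟨z, hz1', hz2'⟩ := Ultrafilter.nonempty_of_mem hB''W
          have hz1 : z ∈ U₀ := hB'U hz1'
          have hz2 : z - d ∈ U₀ := hBU hz1'.2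
          have hze : z - e ∈ B' := hz2'
          have hz3 : z - e ∈ U₀ := hB'U hze
          have hz4 : z - e - d ∈ U₀ := hBU hze.2
          -- color facts for the four realized differences
          have hA3 := colors (z - d) z hz2 hz1 (by intro hh; omega)
          rw [show z - (z - d) = d by ring] at hA3
          have hA4 := colors (z - e) z hz3 hz1 (by intro hh; omega)
          rw [show z - (z - e) = e by ring] at hA4
          have hA1 := colors (z - e - d) z hz4 hz1 (by intro hh; omega)
          rw [show z - (z - e - d) = e + d by ring] at hA1
          have hA2 := colors (z - e) (z - d) hz3 hz2 (by intro hh; omega)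
          rw [show z - d - (z - e) = e - d by ring] at hA2
          have hsum : ((e + d).natAbs = e.natAbs + d.natAbs ∧
              (e - d).natAbs = e.natAbs - d.natAbs) ∨
              ((e + d).natAbs = e.natAbs - d.natAbs ∧
              (e - d).natAbs = e.natAbs + d.natAbs) := by omega
          have hF : (decide (((e.natAbs + d.natAbs) / 2 ^ padicValNat 2 (e.natAbs + d.natAbs)) % 4 = 1) = c₁) ∧
              (decide (((e.natAbs - d.natAbs) / 2 ^ padicValNat 2 (e.natAbs - d.natAbs)) % 4 = 1) = c₁) ∧
              (decide (padicValNat 2 (e.natAbs + d.natAbs) % 2 = 0) = c₂) ∧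
              (decide (padicValNat 2 (e.natAbs - d.natAbs) % 2 = 0) = c₂) := by
            rcases hsum with ⟨h1, h2⟩ | ⟨h1, h2⟩
            · rw [h1] at hA1; rw [h2] at hA2
              exact ⟨hA1.1, hA2.1, hA1.2, hA2.2⟩
            · rw [h1] at hA1; rw [h2] at hA2
              exact ⟨hA2.1, hA1.1, hA2.2, hA1.2⟩
          have ha0 : 0 < d.natAbs := Int.natAbs_pos.mpr hd0
          rcases Nat.lt_trichotomy (padicValNat 2 d.natAbs) (padicValNat 2 e.natAbs)
            with hvv | hvv | hvv
          · exact zr_L1 d.natAbs e.natAbs ha0 hlt hvv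
              (decide_eq_decide.mp (hF.1.trans hF.2.1.symm))
          · rcases zr_L2 d.natAbs e.natAbs ha0 hlt hvv with h | h
            · have := decide_eq_decide.mp (hF.2.2.1.trans hA3.2.symm)
              rw [h] at this
              omega
            · have := decide_eq_decide.mp (hF.2.2.2.trans hA3.2.symm)
              rw [h] at this
              omega
          · exact IH (padicValNat 2 e.natAbs) (by omega) B' hB'W hB'U e he0 heW rfl
      obtain ⟨d, hd0, hdW⟩ := hDne U₀ hU₀W
      exact QQ _ U₀ hU₀W (le_refl _) d hd0 hdW rfl
  -- Step 2: from strong discreteness to right cancellability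
  obtain ⟨B, hBW, hB⟩ := key
  set e : ℕ ≃ ℤ := (Denumerable.eqv ℤ).symm with he
  have hFsub : ∀ n, zrFseq B (⇑e) n ⊆ B := by
    intro n x hx
    rw [zrFseq] at hx
    exact hx.1
  have hFW : ∀ n, zrFseq B (⇑e) n ∈ W := by
    intro n
    rw [zrFseq]
    refine inter_mem hBW ?_
    have hrw : {x : ℤ | ∀ m, m < n → x + (e n - e m) ∉ zrFseq B (⇑e) m} =
        ⋂ m ∈ Finset.range n, {x : ℤ | x + (e n - e m) ∈ zrFseq B (⇑e) m}ᶜ := by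
      ext x
      simp [Finset.mem_range]
    rw [hrw]
    refine (Filter.biInter_finset_mem _).mpr ?_
    intro m hm
    have hne : e m - e n ≠ 0 := by
      intro hh
      have : e m = e n := by omega
      exact (Finset.mem_range.mp hm).ne (e.injective this)
    have hsub : {x : ℤ | x + (e n - e m) ∈ zrFseq B (⇑e) m} ⊆ {x : ℤ | x - (e m - e n) ∈ B} := by
      intro x hx
      have h1 : x - (e m - e n) = x + (e n - e m) := by ring
      simp only [Set.mem_setOf_eq, h1]
      exact hFsub m hx
    have hnot : {x : ℤ | x + (e n - e m) ∈ zrFseq B (⇑e) m} ∉ W := by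
      intro h
      exact hB _ hne (mem_of_superset h hsub)
    exact Ultrafilter.compl_mem_iff_notMem.mpr hnot
  have hdisj : ∀ m n : ℕ, m ≠ n → ∀ x ∈ zrFseq B (⇑e) n, ∀ x' ∈ zrFseq B (⇑e) m,
      e n + x ≠ e m + x' := by
    have base : ∀ m n : ℕ, m < n → ∀ x ∈ zrFseq B (⇑e) n, ∀ x' ∈ zrFseq B (⇑e) m,
        e n + x ≠ e m + x' := by
      intro m n hmn x hx x' hx' heq
      rw [zrFseq] at hx
      refine hx.2 m hmn ?_
      have : x + (e n - e m) = x' := by omega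
      rw [this]
      exact hx'
    intro m n hmn x hx x' hx'
    rcases lt_or_gt_of_ne hmn with h | h
    · exact base m n h x hx x' hx'
    · intro heq
      exact base n m h x' hx' x hx heq.symm
  -- the addition membership characterization
  have hchar : ∀ (R : Ultrafilter ℤ) (s : Set ℤ),
      s ∈ R + W ↔ {a : ℤ | {b : ℤ | a + b ∈ s} ∈ W} ∈ R := by
    intro R s
    have h := Ultrafilter.eventually_add R W (· ∈ s)
    simp only [Filter.eventually_iff, Set.setOf_mem_eq] at h
    constructor
    · intro hs
      exact h.mp hs
    · intro hs
      exact h.mpr hs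
  have main : ∀ (P Q : Ultrafilter ℤ), P + W = Q + W → ∀ A : Set ℤ, A ∈ P → A ∈ Q := by
    intro P Q hPQ A hA
    set S : Set ℤ := {y | ∃ n, e n ∈ A ∧ ∃ x ∈ zrFseq B (⇑e) n, y = e n + x} with hS
    have hSP : S ∈ P + W := by
      rw [hchar]
      refine mem_of_superset hA ?_
      intro a ha
      refine mem_of_superset (hFW (e.symm a)) ?_
      intro x hx
      refine ⟨e.symm a, ?_, x, hx, ?_⟩
      · simpa using ha
      · simp
    rw [hPQ, hchar] at hSP
    refine mem_of_superset hSP ?_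
    intro a haT
    by_contra haA
    have hdis : ∀ x ∈ zrFseq B (⇑e) (e.symm a), a + x ∉ S := by
      rintro x hx ⟨m, hmA, x', hx', heq⟩
      have hne : m ≠ e.symm a := by
        intro hh
        rw [hh] at hmA
        simp at hmA
        exact haA hmA
      refine hdisj m (e.symm a) hne x hx x' hx' ?_
      rw [Equiv.apply_symm_apply]
      exact heq
    have hnot : {b : ℤ | a + b ∈ S} ∉ W := by
      intro hmem
      obtain ⟨x, hx1, hx2⟩ := Ultrafilter.nonempty_of_mem (inter_mem hmem (hFW (e.symm a)))
      exact hdis x hx2 hx1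
    exact hnot haT
  intro U V hUV
  exact (Ultrafilter.coe_le_coe.mp (Filter.le_def.mpr fun s hs => main U V hUV s hs)).symm
end

section
/- Let U be a ℤ-Ramsey free ultrafilter on ℤ with ℤ⁺ ∈ U. If some member A of U is 1-thin (|(g + A) ∩ A| ≤ 1 for every nonzero integer g), then U is selective. -/
/-- `A` is 1-thin: `|(g + A) ∩ A| ≤ 1` for every nonzero `g`. -/
def IsOneThin (A : Set ℤ) : Prop :=
  ∀ g : ℤ, g ≠ 0 → (((g + ·) '' A) ∩ A).Subsingleton

/-- `U` is selective: every 2-coloring of pairs is monochrome on the pairs of a member. -/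
def IsSelectivePairs (U : Ultrafilter ℤ) : Prop :=
  ∀ φ : ℤ → ℤ → Bool, (∀ x y, φ x y = φ y x) →
    ∃ U₀ ∈ U, ∃ c : Bool, ∀ x ∈ U₀, ∀ y ∈ U₀, x ≠ y → φ x y = c

theorem selective_of_zRamsey_with_thin_member (U : Ultrafilter ℤ)
    (hfree : Filter.cofinite ≤ (U : Filter ℤ))
    (hpos : {z : ℤ | 0 < z} ∈ U)
    (hRamsey : IsZRamsey U)
    (hthin : ∃ A ∈ U, IsOneThin A) :
    IsSelectivePairs U := by
  classical
  obtain ⟨A, hAU, hthinA⟩ := hthin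
  intro φ hsym
  -- Q d: there is a pair in A with difference d
  set Q : ℤ → Prop := fun d => ∃ p : ℤ × ℤ, p.1 ∈ A ∧ p.2 ∈ A ∧ p.1 < p.2 ∧ p.2 - p.1 = d
    with hQ
  -- uniqueness of such a pair, from 1-thinness
  have huniq : ∀ d, ∀ p q : ℤ × ℤ,
      (p.1 ∈ A ∧ p.2 ∈ A ∧ p.1 < p.2 ∧ p.2 - p.1 = d) →
      (q.1 ∈ A ∧ q.2 ∈ A ∧ q.1 < q.2 ∧ q.2 - q.1 = d) → p = q := by
    intro d p q ⟨hp1, hp2, hplt, hpd⟩ ⟨hq1, hq2, hqlt, hqd⟩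
    have hd0 : d ≠ 0 := by omega
    have h1 : p.2 ∈ ((d + ·) '' A) ∩ A := ⟨⟨p.1, hp1, by show d + p.1 = p.2; omega⟩, hp2⟩
    have h2 : q.2 ∈ ((d + ·) '' A) ∩ A := ⟨⟨q.1, hq1, by show d + q.1 = q.2; omega⟩, hq2⟩
    have h22 : p.2 = q.2 := hthinA d hd0 h1 h2
    have : p.1 = q.1 := by omega
    exact Prod.ext this h22
  set χ' : ℤ → Bool := fun d => if h : Q d then φ h.choose.1 h.choose.2 else false with hχ
  obtain ⟨U₀, hU₀, c, hc⟩ := hRamsey χ'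
  refine ⟨U₀ ∩ A, Filter.inter_mem hU₀ hAU, c, ?_⟩
  have key : ∀ x ∈ U₀ ∩ A, ∀ y ∈ U₀ ∩ A, x < y → φ x y = c := by
    intro x hx y hy hlt
    have hQd : Q (y - x) := ⟨(x, y), hx.2, hy.2, hlt, rfl⟩
    have habs : |y - x| = y - x := abs_of_pos (by omega)
    have hcol : χ' |y - x| = c := hc x hx.1 y hy.1 (by omega)
    rw [habs] at hcol
    have : χ' (y - x) = φ hQd.choose.1 hQd.choose.2 := by
      simp only [hχ, dif_pos hQd]
    have hpq : hQd.choose = (x, y) := huniq (y - x) _ _ hQd.choose_spec ⟨hx.2, hy.2, hlt, rfl⟩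
    rw [this, hpq] at hcol
    exact hcol
  intro x hx y hy hne
  rcases lt_or_gt_of_ne hne with h | h
  · exact key x hx y hy h
  · rw [hsym x y]; exact key y hy x hx h
end
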